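/- Let (T, μ), (S, ν) be σ-finite measure spaces, ψ : S → T measurable and injective with measurable inverse on its image, 1 ≤ q ≤ p < ∞, ν ∘ ψ⁻¹ ≪ μ with density J, and let ρ : T → [0,∞) be measurable. Then the weighted composition operator M_ψ[f](s) = ρ(ψ(s)) f(ψ(s)) is bounded from L^p(T, μ) to L^q(S, ν) if and only if ρ · J^{1/q} ∈ L^κ(T, μ), where κ = pq/(p−q) for p > q and κ = ∞ for p = q. -/

import Mathlib

open MeasureTheory ENNReal

/-- Membership `g ∈ L^κ(T,μ)` for an `ℝ≥0∞`-valued `g`, with `κ = pq/(p-q)` for `p > q`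
and `κ = ∞` for `p = q`. -/
noncomputable def memLkappa {T : Type*} [MeasurableSpace T] (μ : Measure T)
    (p q : ℝ) (g : T → ℝ≥0∞) : Prop :=
  if p = q then essSup g μ ≠ ⊤
  else ∫⁻ t, g t ^ (p * q / (p - q)) ∂μ ≠ ⊤

/-! Changing variables along `ψ` turns `‖M_ψ f‖_{L^q(ν)}` into `‖w f‖_{L^q(μ)}` with
`w = ρ J^{1/q}`, so the question is when multiplication by `w` maps `L^p(μ)` to `L^q(μ)`.
Sufficiency is Hölder's inequality with `1/q = 1/κ + 1/p`. For necessity, testing the bound on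
`f = h^{1/p}`, for finite-valued `h ≤ w^κ` of finite integral, gives `∫ h ≤ K^κ`, and by
σ-finiteness such `h` increase to `w^κ`. For `p = q` the test functions are indicators of sets
of finite positive measure on which `w > c`. -/

lemma ENNReal.le_mul_rpow_rpow_of_le_rpow {a b : ℝ≥0∞} {p q κ : ℝ} (hp : 0 < p) (hq : 0 < q)
    (hκ : 0 < κ) (hpqκ : 1 / q = 1 / κ + 1 / p) (hab : a ≤ b ^ κ) :
    a ≤ (b * a ^ (1 / p)) ^ q := by
  have hb : a ^ (1 / κ) ≤ b := by rwa [one_div, rpow_inv_le_iff hκ]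
  calc a = a ^ (1 / κ * q + 1 / p * q) := by
        rw [← add_mul, ← hpqκ, one_div_mul_cancel hq.ne', rpow_one]
    _ = (a ^ (1 / κ)) ^ q * (a ^ (1 / p)) ^ q := by
        rw [rpow_add_of_nonneg _ _ (by positivity) (by positivity), rpow_mul, rpow_mul]
    _ ≤ (b * a ^ (1 / p)) ^ q := by
        rw [mul_rpow_of_nonneg _ _ hq.le]
        gcongr

lemma ENNReal.le_rpow_of_rpow_le_mul_rpow {a K : ℝ≥0∞} (ha : a ≠ ∞) {p q κ : ℝ} (hp : 0 < p)
    (hκ : 0 < κ) (hpqκ : 1 / q = 1 / κ + 1 / p) (h : a ^ (1 / q) ≤ K * a ^ (1 / p)) :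
    a ≤ K ^ κ := by
  rcases eq_or_ne a 0 with rfl | ha0
  · exact zero_le
  rw [hpqκ, rpow_add _ _ ha0 ha] at h
  have h' : a ^ (1 / κ) ≤ K := (ENNReal.mul_le_mul_iff_left
    (rpow_pos (pos_iff_ne_zero.2 ha0) ha).ne' (rpow_ne_top_of_nonneg (by positivity) ha)).1 h
  rwa [one_div, rpow_inv_le_iff hκ] at h'

section

variable {α : Type*} [MeasurableSpace α] {μ : Measure α}

lemma eLpNorm_ofReal_eq_lintegral {ε : Type*} [ENorm ε] {q : ℝ} (hq : 0 < q) (f : α → ε) :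
    eLpNorm f (ENNReal.ofReal q) μ = (∫⁻ x, ‖f x‖ₑ ^ q ∂μ) ^ (1 / q) := by
  rw [eLpNorm_eq_lintegral_rpow_enorm_toReal (by simpa using hq) ofReal_ne_top,
    toReal_ofReal hq.le]

lemma eLpNorm_withDensity_ofReal {ε : Type*} [TopologicalSpace ε] [ContinuousENorm ε]
    {J : α → ℝ≥0∞} (hJ : AEMeasurable J μ) {g : α → ε}
    (hg : AEStronglyMeasurable g (μ.withDensity J)) {q : ℝ} (hq : 0 < q) :
    eLpNorm g (ENNReal.ofReal q) (μ.withDensity J) =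
      eLpNorm (fun x => J x ^ (1 / q) * ‖g x‖ₑ) (ENNReal.ofReal q) μ := by
  simp only [eLpNorm_ofReal_eq_lintegral hq, enorm_eq_self]
  rw [lintegral_withDensity_eq_lintegral_mul₀' hJ (hg.enorm.pow_const q)]
  congr 1
  refine lintegral_congr fun x => ?_
  rw [mul_rpow_of_nonneg _ _ hq.le, ← rpow_mul, one_div_mul_cancel hq.ne', rpow_one]
  rfl

lemma eLpNorm_mul_enorm_le_essSup_mul {ε : Type*} [TopologicalSpace ε] [ContinuousENorm ε]
    (w : α → ℝ≥0∞) {f : α → ε} (hf : AEStronglyMeasurable f μ) {q : ℝ} (hq : 0 < q) :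
    eLpNorm (fun x => w x * ‖f x‖ₑ) (ENNReal.ofReal q) μ ≤
      essSup w μ * eLpNorm f (ENNReal.ofReal q) μ := by
  simp only [eLpNorm_ofReal_eq_lintegral hq, enorm_eq_self]
  calc (∫⁻ x, (w x * ‖f x‖ₑ) ^ q ∂μ) ^ (1 / q)
      ≤ (∫⁻ x, essSup w μ ^ q * ‖f x‖ₑ ^ q ∂μ) ^ (1 / q) := by
        gcongr ?_ ^ _
        refine lintegral_mono_ae ?_
        filter_upwards [ENNReal.ae_le_essSup w] with x hx
        rw [mul_rpow_of_nonneg _ _ hq.le]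
        gcongr
    _ = essSup w μ * (∫⁻ x, ‖f x‖ₑ ^ q ∂μ) ^ (1 / q) := by
        rw [lintegral_const_mul'' _ (hf.enorm.pow_const q), mul_rpow_of_nonneg _ _ (by positivity),
          ← rpow_mul, mul_one_div_cancel hq.ne', rpow_one]

lemma essSup_le_of_forall_lt_on_finite_measure [SigmaFinite μ] {F : α → ℝ≥0∞}
    (hF : Measurable F) {K : ℝ≥0∞}
    (H : ∀ (c : ℝ≥0∞) (A : Set α), MeasurableSet A → μ A ≠ 0 → μ A ≠ ∞ →
      (∀ x ∈ A, c < F x) → c ≤ K) :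
    essSup F μ ≤ K := by
  refine le_of_forall_lt_imp_le_of_dense fun c hc => ?_
  have hpos : 0 < μ {x | c < F x} := by
    refine pos_iff_ne_zero.2 fun h0 => hc.not_ge (essSup_le_of_ae_le c ?_)
    rw [Filter.EventuallyLE, ae_iff]
    simpa using h0
  obtain ⟨A, hA, hAF, hA0, hAtop⟩ :=
    Measure.exists_subset_measure_lt_top (measurableSet_lt measurable_const hF) hpos
  exact H c A hA hA0.ne' hAtop.ne hAF

lemma lintegral_le_of_forall_finite_le [SigmaFinite μ] {F : α → ℝ≥0∞} (hF : Measurable F)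
    {c : ℝ≥0∞} (H : ∀ h : α → ℝ≥0∞, Measurable h → h ≤ F → (∀ x, h x ≠ ∞) →
      ∫⁻ x, h x ∂μ ≠ ∞ → ∫⁻ x, h x ∂μ ≤ c) :
    ∫⁻ x, F x ∂μ ≤ c := by
  -- `φ > 0` is integrable, so the finite truncations `F ⊓ n φ` increase to `F`.
  obtain ⟨φ, hφ_pos, hφ, hφ_int⟩ := exists_pos_lintegral_lt_of_sigmaFinite μ one_ne_zero
  set h : ℕ → α → ℝ≥0∞ := fun n x => F x ⊓ n * φ x
  have h_meas : ∀ n, Measurable (h n) :=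
    fun n => hF.inf (measurable_const.mul hφ.coe_nnreal_ennreal)
  have h_mono : Monotone h := fun m n hmn x => inf_le_inf_left _ (by gcongr)
  have h_sup : ∀ x, ⨆ n, h n x = F x := fun x => by
    rw [← inf_iSup_eq, ← ENNReal.iSup_mul, ENNReal.iSup_natCast,
      top_mul (by simpa using (hφ_pos x).ne'), inf_top_eq]
  have h_int : ∀ n, ∫⁻ x, h n x ∂μ ≠ ∞ := fun n =>
    ne_top_of_le_ne_top
      (by rw [lintegral_const_mul _ hφ.coe_nnreal_ennreal]
          exact mul_ne_top (natCast_ne_top n) (hφ_int.trans one_lt_top).ne)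
      (lintegral_mono fun x => inf_le_right)
  calc ∫⁻ x, F x ∂μ = ⨆ n, ∫⁻ x, h n x ∂μ := by
        simp_rw [← h_sup]; exact lintegral_iSup h_meas h_mono
    _ ≤ c := iSup_le fun n => H (h n) (h_meas n) (fun x => inf_le_left)
        (fun x => ne_top_of_le_ne_top (mul_ne_top (natCast_ne_top n) coe_ne_top) inf_le_right)
        (h_int n)

lemma essSup_le_of_forall_eLpNorm_mul_enorm_le [SigmaFinite μ] {w : α → ℝ≥0∞}
    (hw : Measurable w) {q : ℝ} (hq : 0 < q) {K : ℝ≥0∞}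
    (hK : ∀ f : α → ℝ, Measurable f →
      eLpNorm (fun x => w x * ‖f x‖ₑ) (ENNReal.ofReal q) μ ≤ K * eLpNorm f (ENNReal.ofReal q) μ) :
    essSup w μ ≤ K := by
  refine essSup_le_of_forall_lt_on_finite_measure hw fun c A hA hA0 hAtop hcA => ?_
  have hq' : ENNReal.ofReal q ≠ 0 := by simpa using hq
  have hA_pos : μ A ^ (1 / q) ≠ 0 := (rpow_pos (pos_iff_ne_zero.2 hA0) hAtop).ne'
  have hA_fin : μ A ^ (1 / q) ≠ ∞ := rpow_ne_top_of_nonneg (by positivity) hAtop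
  have hlow : eLpNorm (A.indicator fun _ => c) (ENNReal.ofReal q) μ ≤
      eLpNorm (fun x => w x * ‖A.indicator (fun _ => (1 : ℝ)) x‖ₑ) (ENNReal.ofReal q) μ := by
    refine eLpNorm_mono_enorm fun x => ?_
    by_cases hx : x ∈ A
    · simpa [hx] using (hcA x hx).le
    · simp [hx]
  have hbound := hlow.trans (hK _ (measurable_const.indicator hA))
  rw [eLpNorm_indicator_const hA hq' ofReal_ne_top, eLpNorm_indicator_const hA hq' ofReal_ne_top,
    toReal_ofReal hq.le, enorm_eq_self, enorm_one, one_mul] at hbound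
  exact (ENNReal.mul_le_mul_iff_left hA_pos hA_fin).1 hbound

lemma lintegral_le_rpow_of_forall_eLpNorm_mul_enorm_le {w : α → ℝ≥0∞} {p q κ : ℝ} (hp : 0 < p)
    (hq : 0 < q) (hκ : 0 < κ) (hpqκ : 1 / q = 1 / κ + 1 / p) {K : ℝ≥0∞}
    (hK : ∀ f : α → ℝ, Measurable f →
      eLpNorm (fun x => w x * ‖f x‖ₑ) (ENNReal.ofReal q) μ ≤ K * eLpNorm f (ENNReal.ofReal p) μ)
    {h : α → ℝ≥0∞} (hh : Measurable h) (hhw : ∀ x, h x ≤ w x ^ κ) (hh_fin : ∀ x, h x ≠ ∞)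
    (hh_int : ∫⁻ x, h x ∂μ ≠ ∞) :
    ∫⁻ x, h x ∂μ ≤ K ^ κ := by
  set f : α → ℝ := fun x => (h x ^ (1 / p)).toReal
  have hf_enorm : ∀ x, ‖f x‖ₑ = h x ^ (1 / p) := fun x => by
    rw [Real.enorm_of_nonneg toReal_nonneg,
      ofReal_toReal (rpow_ne_top_of_nonneg (by positivity) (hh_fin x))]
  have hf_p : eLpNorm f (ENNReal.ofReal p) μ = (∫⁻ x, h x ∂μ) ^ (1 / p) := by
    simp only [eLpNorm_ofReal_eq_lintegral hp, hf_enorm, ← rpow_mul, one_div_mul_cancel hp.ne',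
      rpow_one]
  have hf_q : (∫⁻ x, h x ∂μ) ^ (1 / q) ≤
      eLpNorm (fun x => w x * ‖f x‖ₑ) (ENNReal.ofReal q) μ := by
    simp only [eLpNorm_ofReal_eq_lintegral hq, enorm_eq_self, hf_enorm]
    gcongr with x
    exact le_mul_rpow_rpow_of_le_rpow hp hq hκ hpqκ (hhw x)
  refine le_rpow_of_rpow_le_mul_rpow hh_int hp hκ hpqκ ?_
  calc (∫⁻ x, h x ∂μ) ^ (1 / q) ≤ K * eLpNorm f (ENNReal.ofReal p) μ :=
        hf_q.trans (hK f (hh.pow_const _).ennreal_toReal)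
    _ = K * (∫⁻ x, h x ∂μ) ^ (1 / p) := by rw [hf_p]

theorem exists_eLpNorm_mul_enorm_le_iff_memLkappa [SigmaFinite μ] {p q : ℝ} (hq : 0 < q)
    (hqp : q ≤ p) {w : α → ℝ≥0∞} (hw : Measurable w) :
    (∃ K : ℝ≥0∞, K ≠ ∞ ∧ ∀ f : α → ℝ, Measurable f →
        eLpNorm (fun x => w x * ‖f x‖ₑ) (ENNReal.ofReal q) μ ≤ K * eLpNorm f (ENNReal.ofReal p) μ)
      ↔ memLkappa μ p q w := by
  rcases hqp.eq_or_lt with rfl | hqp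
  · simp only [memLkappa, if_true]
    exact ⟨fun ⟨K, hK, hbound⟩ =>
        ne_top_of_le_ne_top hK (essSup_le_of_forall_eLpNorm_mul_enorm_le hw hq hbound),
      fun h => ⟨essSup w μ, h, fun f hf =>
        eLpNorm_mul_enorm_le_essSup_mul w hf.aestronglyMeasurable hq⟩⟩
  have hp : 0 < p := hq.trans hqp
  set κ := p * q / (p - q)
  have hκ : 0 < κ := div_pos (mul_pos hp hq) (sub_pos.2 hqp)
  have hpqκ : 1 / q = 1 / κ + 1 / p := by
    simp only [κ]
    field_simp
    ring
  have hqκ : q < κ := by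
    have : 1 / κ < 1 / q := by rw [hpqκ]; linarith [one_div_pos.2 hp]
    exact (one_div_lt_one_div hκ hq).1 this
  simp only [memLkappa, if_neg hqp.ne']
  constructor
  · rintro ⟨K, hK, hbound⟩
    refine ne_top_of_le_ne_top (rpow_ne_top_of_nonneg hκ.le hK) ?_
    exact lintegral_le_of_forall_finite_le (hw.pow_const κ) fun h hh hhw hh_fin hh_int =>
      lintegral_le_rpow_of_forall_eLpNorm_mul_enorm_le hp hq hκ hpqκ hbound hh hhw hh_fin hh_int
  · intro hw_int
    refine ⟨(∫⁻ x, w x ^ κ ∂μ) ^ (1 / κ), rpow_ne_top_of_nonneg (by positivity) hw_int,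
      fun f hf => ?_⟩
    simpa [eLpNorm_ofReal_eq_lintegral hq, eLpNorm_ofReal_eq_lintegral hp] using
      ENNReal.lintegral_Lp_mul_le_Lq_mul_Lr hq hqκ hpqκ μ hw.aemeasurable
        hf.aestronglyMeasurable.enorm

end

/-- For an injective `ψ` with measurable inverse on its image and `ν ∘ ψ⁻¹ ≪ μ` with
density `J`, the weighted composition operator `M_ψ[f](s) = ρ(ψ(s)) f(ψ(s))` is bounded
from `L^p(T,μ)` to `L^q(S,ν)` iff `ρ·J^{1/q} ∈ L^κ(T,μ)` (`κ = pq/(p-q)` for `p > q`,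
`κ = ∞` for `p = q`). -/
theorem weighted_composition_injective_bounded_iff
    {T S : Type*} [MeasurableSpace T] [MeasurableSpace S]
    (μ : Measure T) (ν : Measure S) [SigmaFinite μ] [SigmaFinite ν]
    (p q : ℝ) (hq : 1 ≤ q) (hqp : q ≤ p)
    (ψ : S → T) (hψ : MeasurableEmbedding ψ)
    (habs : Measure.map ψ ν ≪ μ)
    (J : T → ℝ≥0∞) (hJ : J = (Measure.map ψ ν).rnDeriv μ)
    (ρ : T → ℝ) (hρ : Measurable ρ) (hρ0 : ∀ t, 0 ≤ ρ t) :
    (∃ K : ℝ≥0∞, K ≠ ⊤ ∧ ∀ f : T → ℝ, Measurable f →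
        eLpNorm (fun s => ρ (ψ s) * f (ψ s)) (ENNReal.ofReal q) ν ≤
          K * eLpNorm f (ENNReal.ofReal p) μ)
      ↔ memLkappa μ p q (fun t => ENNReal.ofReal (ρ t) * J t ^ (1 / q)) := by
  have hq0 : 0 < q := one_pos.trans_le hq
  have hJ_meas : Measurable J := hJ ▸ Measure.measurable_rnDeriv _ _
  have : SigmaFinite (ν.map ψ) := hψ.sigmaFinite_map
  have hmap : ν.map ψ = μ.withDensity J := by rw [hJ, Measure.withDensity_rnDeriv_eq _ _ habs]
  have hchange : ∀ f : T → ℝ, Measurable f →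
      eLpNorm (fun s => ρ (ψ s) * f (ψ s)) (ENNReal.ofReal q) ν =
        eLpNorm (fun t => ENNReal.ofReal (ρ t) * J t ^ (1 / q) * ‖f t‖ₑ) (ENNReal.ofReal q) μ := by
    intro f hf
    rw [show (fun s => ρ (ψ s) * f (ψ s)) = (fun t => ρ t * f t) ∘ ψ from rfl,
      ← hψ.eLpNorm_map_measure, hmap,
      eLpNorm_withDensity_ofReal (g := fun t => ρ t * f t) hJ_meas.aemeasurable
        (hρ.mul hf).aestronglyMeasurable hq0]
    congr 1 with t
    rw [enorm_mul, Real.enorm_of_nonneg (hρ0 t)]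
    ring
  have hw : Measurable fun t => ENNReal.ofReal (ρ t) * J t ^ (1 / q) := by fun_prop
  rw [← exists_eLpNorm_mul_enorm_le_iff_memLkappa hq0 hqp hw]
  exact exists_congr fun K => and_congr_right fun _ =>
    forall₂_congr fun f hf => by rw [hchange f hf]
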